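/- arXiv:1808.10191 — 2 statements merged into one kernel-verified Lean document; each statement's English description precedes it below -/
import Mathlib

section
/- For every even n ≥ 4, Rubinstein's function satisfies 4 · bs(f_R) ≥ s(f_R) · alt(f_R), i.e., bs(f_R) ≥ s(f_R)·alt(f_R)/4. -/
open scoped Classical

/-- Pointwise XOR of Boolean vectors. -/
def bxor {n : ℕ} (x y : Fin n → Bool) : Fin n → Bool := fun i => Bool.xor (x i) (y i)

/-- Indicator vector of a set of coordinates. -/
def eB {n : ℕ} (B : Finset (Fin n)) : Fin n → Bool := fun i => decide (i ∈ B)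

/-- Standard basis vector. -/
def eI {n : ℕ} (i : Fin n) : Fin n → Bool := fun j => decide (j = i)

/-- Sensitivity of `f` at `a`. -/
def sensAt {n : ℕ} (f : (Fin n → Bool) → Bool) (a : Fin n → Bool) : ℕ :=
  (Finset.univ.filter fun i : Fin n => f (bxor a (eI i)) ≠ f a).card

/-- Sensitivity of `f`. -/
def sens {n : ℕ} (f : (Fin n → Bool) → Bool) : ℕ :=
  Finset.univ.sup fun a : Fin n → Bool => sensAt f a

/-- Block sensitivity of `f` at `a`: the largest number of pairwise disjoint nonempty
sensitive blocks. -/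
def bsAt {n : ℕ} (f : (Fin n → Bool) → Bool) (a : Fin n → Bool) : ℕ :=
  Finset.univ.sup fun S : Finset (Finset (Fin n)) =>
    if (∀ B ∈ S, B.Nonempty ∧ f (bxor a (eB B)) ≠ f a) ∧
       (∀ B ∈ S, ∀ C ∈ S, B ≠ C → Disjoint B C)
    then S.card else 0

/-- Block sensitivity of `f`. -/
def bs {n : ℕ} (f : (Fin n → Bool) → Bool) : ℕ :=
  Finset.univ.sup fun a : Fin n → Bool => bsAt f a

/-- `x` is a monotone chain `0^n = x^0 ≺ x^1 ≺ ⋯ ≺ x^n = 1^n` in the Boolean cube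
(each step strictly increases, hence flips exactly one coordinate from 0 to 1). -/
def IsChainOn {n : ℕ} (x : Fin (n + 1) → Fin n → Bool) : Prop :=
  x 0 = (fun _ => false) ∧ x (Fin.last n) = (fun _ => true) ∧
    ∀ i : Fin n, (∀ j, x i.castSucc j ≤ x i.succ j) ∧ x i.castSucc ≠ x i.succ

/-- Alternation of `f` along a chain `x`. -/
def altChain {n : ℕ} (f : (Fin n → Bool) → Bool) (x : Fin (n + 1) → Fin n → Bool) : ℕ :=
  (Finset.univ.filter fun i : Fin n => f (x i.succ) ≠ f (x i.castSucc)).card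

/-- Alternation of `f`: maximal alternation along a chain. -/
noncomputable def altF {n : ℕ} (f : (Fin n → Bool) → Bool) : ℕ :=
  Finset.univ.sup fun x : Fin (n + 1) → Fin n → Bool =>
    if IsChainOn x then altChain f x else 0

/-- Shift-invariant alternation: minimum alternation over all shifts of `f`. -/
noncomputable def saltF {n : ℕ} (f : (Fin n → Bool) → Bool) : ℕ :=
  (Finset.univ : Finset (Fin n → Bool)).inf' Finset.univ_nonempty
    fun b => altF fun x => f (bxor x b)

theorem mulIdx_lt {k n : ℕ} (i : Fin k) (j : Fin n) : i.1 * n + j.1 < k * n := by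
  calc i.1 * n + j.1 < i.1 * n + n := Nat.add_lt_add_left j.isLt _
    _ = (i.1 + 1) * n := by ring
    _ ≤ k * n := Nat.mul_le_mul_right n i.isLt

/-- `hR a = 1` iff `a` has two consecutive ones starting at an odd (1-based) position and
all other coordinates zero; in 0-based indexing: `a` is the indicator of `{j, j+1}` for
some even `j` (0-based) with `j + 1 < n`. -/
def hR {n : ℕ} (a : Fin n → Bool) : Bool :=
  decide (∃ j : Fin n, j.1 % 2 = 0 ∧ j.1 + 1 < n ∧
    ∀ l : Fin n, a l = decide (l.1 = j.1 ∨ l.1 = j.1 + 1))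

/-- Rubinstein's function on an `n × n` Boolean matrix (row `i` is
`y_{i·n}, …, y_{i·n + n - 1}`): the OR over rows of `hR`. -/
def fR (n : ℕ) : (Fin (n * n) → Bool) → Bool := fun y =>
  decide (∃ i : Fin n, hR (fun j : Fin n => y ⟨i.1 * n + j.1, mulIdx_lt i j⟩) = true)


-- helpers
lemma hR_iff {n : ℕ} (a : Fin n → Bool) :
    hR a = true ↔ ∃ j : Fin n, j.1 % 2 = 0 ∧ j.1 + 1 < n ∧
      ∀ l : Fin n, a l = decide (l.1 = j.1 ∨ l.1 = j.1 + 1) := by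
  simp [hR]

def Rrow (n : ℕ) (y : Fin (n*n) → Bool) (i : Fin n) : Fin n → Bool :=
  fun j => y ⟨i.1 * n + j.1, mulIdx_lt i j⟩

lemma fR_iff {n : ℕ} (y : Fin (n*n) → Bool) :
    fR n y = true ↔ ∃ i : Fin n, hR (Rrow n y i) = true := by
  simp only [fR, decide_eq_true_eq]
  exact Iff.rfl

lemma unique_divmod {n i j d m : ℕ} (hj : j < n) (hm : m < n)
    (h : i * n + j = d * n + m) : i = d ∧ j = m := by
  have hn0 : 0 < n := by omega
  have h1 : (i * n + j) / n = i := by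
    rw [Nat.add_comm, Nat.add_mul_div_right _ _ hn0, Nat.div_eq_of_lt hj, Nat.zero_add]
  have h2 : (d * n + m) / n = d := by
    rw [Nat.add_comm, Nat.add_mul_div_right _ _ hn0, Nat.div_eq_of_lt hm, Nat.zero_add]
  have : i = d := by rw [← h1, h, h2]
  subst this
  exact ⟨rfl, by omega⟩

def rIdx {n : ℕ} (p : Fin (n*n)) : Fin n := ⟨p.1 / n, Nat.div_lt_of_lt_mul p.2⟩
def cIdx {n : ℕ} (hn : 0 < n) (p : Fin (n*n)) : Fin n := ⟨p.1 % n, Nat.mod_lt _ hn⟩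

lemma idx_eq {n : ℕ} (hn : 0 < n) (p : Fin (n*n)) (i j : Fin n) :
    ((⟨i.1 * n + j.1, mulIdx_lt i j⟩ : Fin (n*n)) = p) ↔ (i = rIdx p ∧ j = cIdx hn p) := by
  constructor
  · intro h
    have hval : i.1 * n + j.1 = p.1 := congrArg Fin.val h
    have hdm : p.1 = (p.1 / n) * n + p.1 % n := by
      rw [Nat.div_add_mod'] 
    have := unique_divmod j.isLt (Nat.mod_lt _ hn) (hval.trans hdm)
    exact ⟨Fin.ext this.1, Fin.ext this.2⟩
  · rintro ⟨rfl, rfl⟩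
    apply Fin.ext
    simp only [rIdx, cIdx]
    rw [Nat.div_add_mod']

lemma hR_flip_unique {n : ℕ} {v : Fin n → Bool} {p q : Fin n}
    (hp : hR (bxor v (eI p)) = true) (hq : hR (bxor v (eI q)) = true) : p = q := by
  rw [hR_iff] at hp hq
  obtain ⟨j, hj2, hj1, hjP⟩ := hp
  obtain ⟨k, hk2, hk1, hkP⟩ := hq
  by_contra hpq
  have key : ∀ l : Fin n,
      decide (l.1 = j.1 ∨ l.1 = j.1 + 1) ≠ decide (l.1 = k.1 ∨ l.1 = k.1 + 1) →
      l.1 = p.1 ∨ l.1 = q.1 := by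
    intro l hl
    by_contra hcon
    push_neg at hcon
    have e1 := hjP l
    have e2 := hkP l
    have hlp : l ≠ p := fun h => hcon.1 (congrArg Fin.val h)
    have hlq : l ≠ q := fun h => hcon.2 (congrArg Fin.val h)
    simp only [bxor, eI, decide_eq_false hlp, decide_eq_false hlq, Bool.xor_false] at e1 e2
    exact hl (e1 ▸ e2 ▸ rfl)
  by_cases hjk : j.1 = k.1
  · -- identical patterns forces p = q
    have e1 := hjP p
    have e2 := hkP p
    simp only [bxor, eI, decide_eq_true_eq] at e1 e2
    rw [hjk] at e1
    have h3 := e1.trans e2.symm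
    cases hv : v p <;> rw [hv] at h3 <;> simp at h3 <;> exact hpq h3
  · have hd1 : j.1 ≠ k.1 + 1 := by omega
    have hd2 : j.1 + 1 ≠ k.1 := by omega
    have c1 := key j (by
      rw [decide_eq_true (show j.1 = j.1 ∨ j.1 = j.1 + 1 by omega),
        decide_eq_false (show ¬(j.1 = k.1 ∨ j.1 = k.1 + 1) by omega)]; simp)
    have c2 := key ⟨j.1+1, hj1⟩ (by
      rw [decide_eq_true (show j.1 + 1 = j.1 ∨ j.1 + 1 = j.1 + 1 by omega),
        decide_eq_false (show ¬(j.1 + 1 = k.1 ∨ j.1 + 1 = k.1 + 1) by omega)]; simp)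
    have c3 := key k (by
      rw [decide_eq_false (show ¬(k.1 = j.1 ∨ k.1 = j.1 + 1) by omega),
        decide_eq_true (show k.1 = k.1 ∨ k.1 = k.1 + 1 by omega)]; simp)
    have c4 := key ⟨k.1+1, hk1⟩ (by
      rw [decide_eq_false (show ¬(k.1 + 1 = j.1 ∨ k.1 + 1 = j.1 + 1) by omega),
        decide_eq_true (show k.1 + 1 = k.1 ∨ k.1 + 1 = k.1 + 1 by omega)]; simp)
    have hPQ : p.1 ≠ q.1 := fun h => hpq (Fin.ext h)
    simp only [Fin.val_mk] at c2 c4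
    omega

lemma Rrow_bxor_eI {n : ℕ} (hn : 0 < n) (y : Fin (n*n) → Bool) (p : Fin (n*n)) (i : Fin n) :
    Rrow n (bxor y (eI p)) i =
      if i = rIdx p then bxor (Rrow n y i) (eI (cIdx hn p)) else Rrow n y i := by
  funext j
  by_cases hi : i = rIdx p
  · simp only [if_pos hi, Rrow, bxor, eI]
    congr 1
    rw [decide_eq_decide]
    rw [idx_eq hn p i j]
    constructor
    · exact fun h => h.2
    · exact fun h => ⟨hi, h⟩
  · simp only [if_neg hi, Rrow, bxor, eI]
    have : ¬ ((⟨i.1 * n + j.1, mulIdx_lt i j⟩ : Fin (n*n)) = p) := by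
      rw [idx_eq hn p i j]; exact fun h => hi h.1
    rw [decide_eq_false this, Bool.xor_false]

lemma p_reconstruct {n : ℕ} (hn : 0 < n) (p : Fin (n*n)) :
    (⟨(rIdx p).1 * n + (cIdx hn p).1, mulIdx_lt _ _⟩ : Fin (n*n)) = p :=
  (idx_eq hn p _ _).mpr ⟨rfl, rfl⟩

lemma sensAt_le {n : ℕ} (hn : 0 < n) (a : Fin (n*n) → Bool) : sensAt (fR n) a ≤ n := by
  classical
  rw [sensAt]
  have hcard : (Finset.univ : Finset (Fin n)).card = n := by simp
  by_cases hfa : fR n a = true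
  · -- all sensitive coords lie in the (unique) good row
    obtain ⟨i0, hi0⟩ := (fR_iff a).mp hfa
    have hrow : ∀ p ∈ (Finset.univ.filter fun p : Fin (n*n) =>
        fR n (bxor a (eI p)) ≠ fR n a), rIdx p = i0 := by
      intro p hp
      by_contra hne
      have hsens := (Finset.mem_filter.mp hp).2
      have heq : Rrow n (bxor a (eI p)) i0 = Rrow n a i0 := by
        rw [Rrow_bxor_eI hn a p i0, if_neg (fun h => hne h.symm)]
      have : fR n (bxor a (eI p)) = true := (fR_iff _).mpr ⟨i0, by rw [heq]; exact hi0⟩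
      rw [this, hfa] at hsens
      exact hsens rfl
    refine le_trans (Finset.card_le_card_of_injOn (cIdx hn) (fun p _ => Finset.mem_univ _) ?_) (by simp)
    intro p hp q hq hpq
    have h1 := hrow p hp
    have h2 := hrow q hq
    apply Fin.ext
    rw [← congrArg Fin.val (p_reconstruct hn p), ← congrArg Fin.val (p_reconstruct hn q),
      h1, h2, hpq]
  · -- f a = false: at most one sensitive coordinate per row
    have hfa' : fR n a = false := by
      cases h : fR n a
      · rfl
      · exact absurd h hfa
    have hkey : ∀ p ∈ (Finset.univ.filter fun p : Fin (n*n) =>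
        fR n (bxor a (eI p)) ≠ fR n a),
        hR (bxor (Rrow n a (rIdx p)) (eI (cIdx hn p))) = true := by
      intro p hp
      have hsens := (Finset.mem_filter.mp hp).2
      rw [hfa'] at hsens
      have htrue : fR n (bxor a (eI p)) = true := by
        cases h : fR n (bxor a (eI p))
        · rw [h] at hsens; exact absurd rfl hsens
        · rfl
      obtain ⟨i, hi⟩ := (fR_iff _).mp htrue
      have hir : i = rIdx p := by
        by_contra hne
        have heq : Rrow n (bxor a (eI p)) i = Rrow n a i := by
          rw [Rrow_bxor_eI hn a p i, if_neg hne]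
        rw [heq] at hi
        have : fR n a = true := (fR_iff _).mpr ⟨i, hi⟩
        rw [this] at hfa'; exact absurd hfa' (by simp)
      rw [hir] at hi
      rw [Rrow_bxor_eI hn a p (rIdx p), if_pos rfl] at hi
      exact hi
    refine le_trans (Finset.card_le_card_of_injOn rIdx (fun p _ => Finset.mem_univ _) ?_) (by simp)
    intro p hp q hq hpq
    have h1 := hkey p hp
    have h2 := hkey q hq
    rw [hpq] at h1
    have : cIdx hn p = cIdx hn q := hR_flip_unique h1 h2
    apply Fin.ext
    rw [← congrArg Fin.val (p_reconstruct hn p), ← congrArg Fin.val (p_reconstruct hn q),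
      hpq, this]

lemma sens_le {n : ℕ} (hn : 0 < n) : sens (fR n) ≤ n :=
  Finset.sup_le fun a _ => sensAt_le hn a

lemma changes_le_two {N : ℕ} (g : Fin (N+1) → Bool)
    (hconv : ∀ a b c : Fin (N+1), a ≤ b → b ≤ c → g a = true → g c = true → g b = true) :
    (Finset.univ.filter fun t : Fin N => g t.succ ≠ g t.castSucc).card ≤ 2 := by
  classical
  set sFT := Finset.univ.filter fun t : Fin N => g t.castSucc = false ∧ g t.succ = true with hsFT
  set sTF := Finset.univ.filter fun t : Fin N => g t.castSucc = true ∧ g t.succ = false with hsTF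
  have hsub : (Finset.univ.filter fun t : Fin N => g t.succ ≠ g t.castSucc) ⊆ sFT ∪ sTF := by
    intro t ht
    have h := (Finset.mem_filter.mp ht).2
    rw [Finset.mem_union, hsFT, hsTF, Finset.mem_filter, Finset.mem_filter]
    cases h1 : g t.castSucc <;> cases h2 : g t.succ
    · rw [h1, h2] at h; exact absurd rfl h
    · exact Or.inl ⟨Finset.mem_univ _, rfl, rfl⟩
    · exact Or.inr ⟨Finset.mem_univ _, rfl, rfl⟩
    · rw [h1, h2] at h; exact absurd rfl h
  have hle : ∀ (t t' : Fin N), t < t' → t.succ ≤ t'.castSucc := by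
    intro t t' h
    rw [Fin.le_def, Fin.val_succ, Fin.coe_castSucc]
    exact h
  have hFT : sFT.card ≤ 1 := by
    rw [Finset.card_le_one]
    intro t ht t' ht'
    obtain ⟨-, ht1, ht2⟩ := Finset.mem_filter.mp ht
    obtain ⟨-, ht1', ht2'⟩ := Finset.mem_filter.mp ht'
    by_contra hne
    rcases lt_or_gt_of_ne hne with h | h
    · have := hconv t.succ t'.castSucc t'.succ (hle _ _ h) (Fin.castSucc_le_succ t') ht2 ht2'
      rw [this] at ht1'; exact absurd ht1' (by simp)
    · have := hconv t'.succ t.castSucc t.succ (hle _ _ h) (Fin.castSucc_le_succ t) ht2' ht2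
      rw [this] at ht1; exact absurd ht1 (by simp)
  have hTF : sTF.card ≤ 1 := by
    rw [Finset.card_le_one]
    intro t ht t' ht'
    obtain ⟨-, ht1, ht2⟩ := Finset.mem_filter.mp ht
    obtain ⟨-, ht1', ht2'⟩ := Finset.mem_filter.mp ht'
    by_contra hne
    rcases lt_or_gt_of_ne hne with h | h
    · have := hconv t.castSucc t.succ t'.castSucc (Fin.castSucc_le_succ t) (hle _ _ h) ht1 ht1'
      rw [this] at ht2; exact absurd ht2 (by simp)
    · have := hconv t'.castSucc t'.succ t.castSucc (Fin.castSucc_le_succ t') (hle _ _ h) ht1' ht1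
      rw [this] at ht2'; exact absurd ht2' (by simp)
  calc (Finset.univ.filter fun t : Fin N => g t.succ ≠ g t.castSucc).card
      ≤ (sFT ∪ sTF).card := Finset.card_le_card hsub
    _ ≤ sFT.card + sTF.card := Finset.card_union_le _ _
    _ ≤ 2 := by omega

lemma chain_mono {N : ℕ} {x : Fin (N + 1) → Fin N → Bool} (hx : IsChainOn x) :
    ∀ a b : Fin (N + 1), a ≤ b → ∀ j, x a j ≤ x b j := by
  intro a b hab j
  have : Monotone (fun t => x t j) := by
    rw [Fin.monotone_iff_le_succ]
    intro i
    exact (hx.2.2 i).1 j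
  exact this hab

lemma row_pattern_eq {n : ℕ} {v w : Fin n → Bool}
    (hvw : ∀ l, v l ≤ w l) (hv : hR v = true) (hw : hR w = true) : v = w := by
  rw [hR_iff] at hv hw
  obtain ⟨j, hj2, hj1, hjP⟩ := hv
  obtain ⟨k, hk2, hk1, hkP⟩ := hw
  have e1 : w j = true := by
    have := hvw j
    rw [hjP j, decide_eq_true (Or.inl rfl)] at this
    exact Bool.le_iff_imp.mp this rfl
  have e2 : w ⟨j.1+1, hj1⟩ = true := by
    have := hvw ⟨j.1+1, hj1⟩
    rw [hjP ⟨j.1+1, hj1⟩, decide_eq_true (Or.inr rfl)] at this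
    exact Bool.le_iff_imp.mp this rfl
  rw [hkP j, decide_eq_true_eq] at e1
  rw [hkP ⟨j.1+1, hj1⟩, decide_eq_true_eq] at e2
  have hjk : j.1 = k.1 := by omega
  funext l
  rw [hjP l, hkP l, hjk]

lemma row_convex {n : ℕ} {x : Fin (n*n + 1) → Fin (n*n) → Bool} (hx : IsChainOn x)
    (r : Fin n) (a b c : Fin (n*n+1)) (hab : a ≤ b) (hbc : b ≤ c)
    (ha : hR (Rrow n (x a) r) = true) (hc : hR (Rrow n (x c) r) = true) :
    hR (Rrow n (x b) r) = true := by
  have hac : ∀ l, Rrow n (x a) r l ≤ Rrow n (x c) r l :=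
    fun l => chain_mono hx a c (le_trans hab hbc) _
  have heq := row_pattern_eq hac ha hc
  have hb : Rrow n (x b) r = Rrow n (x a) r := by
    funext l
    have h1 : Rrow n (x a) r l ≤ Rrow n (x b) r l := chain_mono hx a b hab _
    have h2 : Rrow n (x b) r l ≤ Rrow n (x c) r l := chain_mono hx b c hbc _
    have h3 : Rrow n (x c) r l = Rrow n (x a) r l := by rw [heq]
    rw [h3] at h2
    exact le_antisymm h2 h1
  rw [hb]
  exact ha

lemma altChain_le {n : ℕ} {x : Fin (n*n + 1) → Fin (n*n) → Bool} (hx : IsChainOn x) :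
    altChain (fR n) x ≤ 2 * n := by
  classical
  rw [altChain]
  have hsub : (Finset.univ.filter fun t : Fin (n*n) => fR n (x t.succ) ≠ fR n (x t.castSucc)) ⊆
      Finset.univ.biUnion fun r : Fin n =>
        Finset.univ.filter fun t : Fin (n*n) =>
          hR (Rrow n (x t.succ) r) ≠ hR (Rrow n (x t.castSucc) r) := by
    intro t ht
    have h := (Finset.mem_filter.mp ht).2
    rw [Finset.mem_biUnion]
    by_contra hcon
    push_neg at hcon
    apply h
    have hall : ∀ r : Fin n, hR (Rrow n (x t.succ) r) = hR (Rrow n (x t.castSucc) r) := by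
      intro r
      have := hcon r (Finset.mem_univ r)
      rw [Finset.mem_filter] at this
      push_neg at this
      exact this (Finset.mem_univ t)
    rw [fR, fR]
    rw [decide_eq_decide]
    constructor
    · rintro ⟨i, hi⟩
      exact ⟨i, by show hR (Rrow n (x t.castSucc) i) = true; rw [← hall i]; exact hi⟩
    · rintro ⟨i, hi⟩
      exact ⟨i, by show hR (Rrow n (x t.succ) i) = true; rw [hall i]; exact hi⟩
  calc (Finset.univ.filter fun t : Fin (n*n) => fR n (x t.succ) ≠ fR n (x t.castSucc)).card
      ≤ _ := Finset.card_le_card hsub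
    _ ≤ ∑ r : Fin n, (Finset.univ.filter fun t : Fin (n*n) =>
          hR (Rrow n (x t.succ) r) ≠ hR (Rrow n (x t.castSucc) r)).card :=
        Finset.card_biUnion_le
    _ ≤ ∑ _r : Fin n, 2 := Finset.sum_le_sum fun r _ =>
        changes_le_two (fun t => hR (Rrow n (x t) r)) (row_convex hx r)
    _ = 2 * n := by simp [Finset.sum_const, mul_comm]

lemma altF_le (n : ℕ) : altF (fR n) ≤ 2 * n := by
  apply Finset.sup_le
  intro x _
  by_cases hx : IsChainOn x
  · rw [if_pos hx]; exact altChain_le hx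
  · rw [if_neg hx]; exact Nat.zero_le _

lemma two_k_lt {n : ℕ} (k : Fin (n/2)) : 2 * k.1 + 1 < n := by
  have := k.2; omega

def blk {n : ℕ} (ik : Fin n × Fin (n/2)) : Finset (Fin (n*n)) :=
  { ⟨ik.1.1 * n + 2 * ik.2.1, mulIdx_lt ik.1 ⟨2 * ik.2.1, by have := two_k_lt ik.2; omega⟩⟩,
    ⟨ik.1.1 * n + (2 * ik.2.1 + 1), mulIdx_lt ik.1 ⟨2 * ik.2.1 + 1, two_k_lt ik.2⟩⟩ }

lemma mem_blk {n : ℕ} (ik : Fin n × Fin (n/2)) (p : Fin (n*n)) :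
    p ∈ blk ik ↔ p.1 = ik.1.1 * n + 2 * ik.2.1 ∨ p.1 = ik.1.1 * n + (2 * ik.2.1 + 1) := by
  rw [blk, Finset.mem_insert, Finset.mem_singleton]
  simp [Fin.ext_iff]

lemma zeros : ∀ {m : ℕ}, fR m (fun _ => false) = false := by
  intro m
  rw [fR]
  simp only [decide_eq_false_iff_not]
  rintro ⟨i, hi⟩
  rw [hR_iff] at hi
  obtain ⟨j, _, _, hP⟩ := hi
  have := hP j
  simp at this

lemma blk_flip {n : ℕ} (ik : Fin n × Fin (n/2)) :
    fR n (bxor (fun _ => false) (eB (blk ik))) = true := by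
  rw [fR_iff]
  refine ⟨ik.1, ?_⟩
  rw [hR_iff]
  refine ⟨⟨2 * ik.2.1, by have := two_k_lt ik.2; omega⟩, by simp [Nat.mul_mod_right], two_k_lt ik.2, ?_⟩
  intro l
  show Bool.xor false (eB (blk ik) _) = _
  rw [Bool.false_xor, eB, decide_eq_decide, mem_blk]
  simp only [Fin.val_mk]
  omega

lemma blk_nonempty {n : ℕ} (ik : Fin n × Fin (n/2)) : (blk ik).Nonempty :=
  ⟨⟨ik.1.1 * n + 2 * ik.2.1, mulIdx_lt ik.1 ⟨2 * ik.2.1, by have := two_k_lt ik.2; omega⟩⟩,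
   (mem_blk ik _).mpr (Or.inl rfl)⟩

lemma blk_not_disjoint {n : ℕ} (ik i'k' : Fin n × Fin (n/2))
    (h : ¬ Disjoint (blk ik) (blk i'k')) : ik = i'k' := by
  rw [Finset.disjoint_left] at h
  push_neg at h
  obtain ⟨p, hp1, hp2⟩ := h
  rw [mem_blk] at hp1 hp2
  have hb1 : 2 * ik.2.1 + 1 < n := two_k_lt ik.2
  have hb2 : 2 * i'k'.2.1 + 1 < n := two_k_lt i'k'.2
  have key : ik.1.1 = i'k'.1.1 ∧ ik.2.1 = i'k'.2.1 := by
    rcases hp1 with h1 | h1 <;> rcases hp2 with h2 | h2 <;>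
    · have := unique_divmod (by omega) (by omega) (h1 ▸ h2 : _ = _).symm
      omega
  exact Prod.ext (Fin.ext key.1) (Fin.ext key.2)

lemma bs_ge (n : ℕ) : n * (n / 2) ≤ bs (fR n) := by
  classical
  set a0 : Fin (n*n) → Bool := fun _ => false with ha0
  set S : Finset (Finset (Fin (n*n))) := Finset.image blk Finset.univ with hS
  have hinj : Function.Injective (blk (n := n)) := by
    intro ik i'k' h
    apply blk_not_disjoint
    rw [h, Finset.disjoint_self_iff_empty]
    exact fun he => absurd he (Finset.nonempty_iff_ne_empty.mp (blk_nonempty i'k'))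
  have hcard : S.card = n * (n / 2) := by
    rw [hS, Finset.card_image_of_injective _ hinj, Finset.card_univ, Fintype.card_prod,
      Fintype.card_fin, Fintype.card_fin]
  have hcond : (∀ B ∈ S, B.Nonempty ∧ fR n (bxor a0 (eB B)) ≠ fR n a0) ∧
      (∀ B ∈ S, ∀ C ∈ S, B ≠ C → Disjoint B C) := by
    constructor
    · intro B hB
      rw [hS, Finset.mem_image] at hB
      obtain ⟨ik, -, rfl⟩ := hB
      refine ⟨blk_nonempty ik, ?_⟩
      rw [blk_flip ik, ha0, zeros]
      simp
    · intro B hB C hC hne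
      rw [hS, Finset.mem_image] at hB hC
      obtain ⟨ik, -, rfl⟩ := hB
      obtain ⟨i'k', -, rfl⟩ := hC
      by_contra hd
      exact hne (congrArg blk (blk_not_disjoint _ _ hd))
  have hb : S.card ≤ bsAt (fR n) a0 := by
    rw [bsAt]
    have h := Finset.le_sup (f := fun T : Finset (Finset (Fin (n*n))) =>
      if (∀ B ∈ T, B.Nonempty ∧ fR n (bxor a0 (eB B)) ≠ fR n a0) ∧
         (∀ B ∈ T, ∀ C ∈ T, B ≠ C → Disjoint B C) then T.card else 0) (Finset.mem_univ S)
    simp only [if_pos hcond] at h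
    exact h
  calc n * (n / 2) = S.card := hcard.symm
    _ ≤ bsAt (fR n) a0 := hb
    _ ≤ bs (fR n) := by rw [bs]; exact Finset.le_sup (Finset.mem_univ a0)

/-- for every even `n ≥ 4`, Rubinstein's function satisfies
`4 · bs(f_R) ≥ s(f_R) · alt(f_R)`. -/
theorem stmt10 (n : ℕ) (hn : 4 ≤ n) (hev : Even n) :
    sens (fR n) * altF (fR n) ≤ 4 * bs (fR n) := by
  have hn0 : 0 < n := by omega
  have h1 : sens (fR n) ≤ n := sens_le hn0
  have h2 : altF (fR n) ≤ 2 * n := altF_le n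
  have h3 : n * (n / 2) ≤ bs (fR n) := bs_ge n
  have he : n % 2 = 0 := Nat.even_iff.mp hev
  calc sens (fR n) * altF (fR n) ≤ n * (2 * n) := Nat.mul_le_mul h1 h2
    _ = n * (4 * (n / 2)) := by rw [show 4 * (n/2) = 2 * n by omega]
    _ = 4 * (n * (n / 2)) := by ring
    _ ≤ 4 * bs (fR n) := Nat.mul_le_mul_left 4 h3
end

section
/- For every k ≥ 2 there exists an invertible F_2-linear map L : F_2^{2^k−1} → F_2^{2^k−1} such that the function g = f_k ∘ L satisfies s(g) ≥ √(sparsity(g))/2 − 1, i.e., 2·(s(g) + 1) ≥ √(sparsity(g)). -/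
open scoped Classical

/-- The recursively defined decision-tree function family: `fTree 1 = id` on one bit, and
`fTree (k+1) (b, z, z') = fTree k z` if `b = 0`, `fTree k z'` if `b = 1`
(layout: bit 0 is `b`, bits `1..2^k-1` are `z`, bits `2^k..2^(k+1)-2` are `z'`). -/
def fTree : (k : ℕ) → (Fin (2 ^ k - 1) → Bool) → Bool
  | 0, _ => false
  | 1, x => x ⟨0, by norm_num⟩
  | (k + 2), x =>
    if x ⟨0, by have h : (1:ℕ) < 2 ^ (k + 2) := Nat.one_lt_two_pow_iff.mpr (by omega); omega⟩ then
      fTree (k + 1) (fun j => x ⟨j.1 + 2 ^ (k + 1), by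
        have hj := j.isLt
        have h1 : 0 < 2 ^ (k + 1) := by positivity
        have h2 : 2 ^ (k + 2) = 2 ^ (k + 1) * 2 := pow_succ 2 (k + 1)
        omega⟩)
    else
      fTree (k + 1) (fun j => x ⟨j.1 + 1, by
        have hj := j.isLt
        have h1 : 0 < 2 ^ (k + 1) := by positivity
        have h2 : 2 ^ (k + 2) = 2 ^ (k + 1) * 2 := pow_succ 2 (k + 1)
        omega⟩)

/-- View a Boolean vector as a vector over `F_2`. -/
def b2z {n : ℕ} (x : Fin n → Bool) : Fin n → ZMod 2 := fun i => if x i then 1 else 0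

/-- View a vector over `F_2` as a Boolean vector. -/
def z2b {n : ℕ} (x : Fin n → ZMod 2) : Fin n → Bool := fun i => decide (x i = 1)

/-- The `±1` version `(-1)^g` of a Boolean function. -/
noncomputable def toPM {n : ℕ} (g : (Fin n → Bool) → Bool) (x : Fin n → Bool) : ℝ :=
  if g x then -1 else 1

/-- Fourier coefficient of `(-1)^g` at `S ⊆ [n]`:
`Ĝ(S) = 2^{-n} Σ_x (-1)^{g(x)} (-1)^{Σ_{i ∈ S} x_i}`. -/
noncomputable def fourierCf {n : ℕ} (g : (Fin n → Bool) → Bool) (S : Finset (Fin n)) : ℝ :=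
  (2 ^ n : ℝ)⁻¹ * ∑ x : Fin n → Bool, toPM g x * ∏ i ∈ S, (if x i then (-1 : ℝ) else 1)

/-- Fourier sparsity: the number of nonzero Fourier coefficients of `(-1)^g`. -/
noncomputable def sparsity {n : ℕ} (g : (Fin n → Bool) → Bool) : ℕ :=
  (Finset.univ.filter fun S : Finset (Fin n) => fourierCf g S ≠ 0).card

/-!
Write `F = (-1)^{f_k}` and `g = f_k ∘ L`. Substituting an invertible linear map permutes the
characters `χ_S`, so `sparsity g = sparsity f_k`. From
`F_{k+1}(b, z, z') = ½ (1 + χ_b) F_k(z) + ½ (1 - χ_b) F_k(z')` every nonzero coefficient of `F_{k+1}`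
is `± ½` a nonzero coefficient of `F_k` sitting on one of the two subtrees (`F̂_k(∅) = 0` since
`f_k` is balanced), whence `sparsity f_k ≤ 4^{k-1}`. On the other side, for each of the `2^{k-1}`
leaves `ℓ` let `p_ℓ` be the input that walks down to `ℓ` and reads `1` there; as `p_ℓ` vanishes on
all other leaves, some involution `L` of `F_2^n` sends `e_ℓ` to `p_ℓ`. Then `g(0) = 0` and
`g(e_ℓ) = 1` for every leaf, so `s(g) ≥ 2^{k-1} ≥ √(sparsity g)`.
-/

open Finset Function

lemma zmod_two_eq_zero_or_one (a : ZMod 2) : a = 0 ∨ a = 1 := by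
  revert a; decide

section BooleanCube

variable {n : ℕ}

lemma z2b_b2z (x : Fin n → Bool) : z2b (b2z x) = x := by
  funext i
  cases h : x i <;> simp [b2z, z2b, h]

lemma b2z_z2b (v : Fin n → ZMod 2) : b2z (z2b v) = v := by
  funext i
  rcases zmod_two_eq_zero_or_one (v i) with h | h <;> simp [b2z, z2b, h]

def boolZModEquiv (n : ℕ) : (Fin n → Bool) ≃ (Fin n → ZMod 2) :=
  ⟨b2z, z2b, z2b_b2z, b2z_z2b⟩

lemma b2z_eI (i : Fin n) : b2z (eI i) = Pi.single i 1 := by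
  funext j
  by_cases h : j = i <;> simp [b2z, eI, h]

lemma b2z_false : b2z (fun _ : Fin n => false) = 0 := by
  funext i
  simp [b2z]

lemma z2b_zero : z2b (0 : Fin n → ZMod 2) = fun _ => false := by
  funext i
  simp [z2b]

lemma card_le_sens {f : (Fin n → Bool) → Bool} {a : Fin n → Bool} {A : Finset (Fin n)}
    (hA : ∀ i ∈ A, f (bxor a (eI i)) ≠ f a) : A.card ≤ sens f :=
  calc A.card ≤ sensAt f a := card_le_card fun i hi => mem_filter.2 ⟨mem_univ i, hA i hi⟩
    _ ≤ sens f := le_sup (f := fun a => sensAt f a) (mem_univ a)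

end BooleanCube

section Walsh

variable {n : ℕ}

def walsh (S : Finset (Fin n)) (x : Fin n → Bool) : ℝ :=
  ∏ i ∈ S, if x i then -1 else 1

lemma fourierCf_eq_sum_walsh (g : (Fin n → Bool) → Bool) (S : Finset (Fin n)) :
    fourierCf g S = (2 ^ n : ℝ)⁻¹ * ∑ x, toPM g x * walsh S x := rfl

lemma sum_toPM_mul_walsh (g : (Fin n → Bool) → Bool) (S : Finset (Fin n)) :
    ∑ x, toPM g x * walsh S x = 2 ^ n * fourierCf g S := by
  rw [fourierCf_eq_sum_walsh, mul_inv_cancel_left₀ (by positivity)]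

lemma sum_walsh (S : Finset (Fin n)) :
    ∑ x, walsh S x = if S = ∅ then (2 ^ n : ℝ) else 0 := by
  have hcoord : ∀ i, (∑ b : Bool, if i ∈ S then (if b then (-1 : ℝ) else 1) else 1)
      = if i ∈ S then 0 else 2 := by
    intro i; split_ifs <;> norm_num
  have hprod : ∀ x : Fin n → Bool,
      walsh S x = ∏ i, if i ∈ S then (if x i then (-1 : ℝ) else 1) else 1 := fun x =>
    (Fintype.prod_ite_mem S _).symm
  rw [Fintype.sum_congr _ _ hprod,
    ← Fintype.prod_sum fun i (b : Bool) => if i ∈ S then (if b then (-1 : ℝ) else 1) else 1,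
    Fintype.prod_congr _ _ hcoord]
  split_ifs with hS
  · simp only [hS, notMem_empty, if_false, prod_const, card_univ, Fintype.card_fin]
  · obtain ⟨i, hi⟩ := nonempty_iff_ne_empty.2 hS
    exact prod_eq_zero (mem_univ i) (if_pos hi)

def zmodTwoSign (a : ZMod 2) : ℝ := (-1) ^ a.val

lemma zmodTwoSign_sum {ι : Type*} (s : Finset ι) (v : ι → ZMod 2) :
    zmodTwoSign (∑ i ∈ s, v i) = ∏ i ∈ s, zmodTwoSign (v i) := by
  induction s using Finset.cons_induction with
  | empty => simp [zmodTwoSign]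
  | cons i s hi ih =>
    rw [sum_cons, prod_cons, ← ih, zmodTwoSign, zmodTwoSign, zmodTwoSign, ZMod.val_add,
      ← neg_one_pow_eq_pow_mod_two, pow_add]

def finsetEquivDual (n : ℕ) : Finset (Fin n) ≃ Module.Dual (ZMod 2) (Fin n → ZMod 2) where
  toFun S := ∑ i ∈ S, LinearMap.proj i
  invFun φ := univ.filter fun i => φ (Pi.single i 1) = 1
  left_inv S := by
    ext i
    simp [Pi.single_apply]
  right_inv φ := by
    refine LinearMap.pi_ext fun i c => ?_
    have hc : Pi.single i c = c • (Pi.single i 1 : Fin n → ZMod 2) := by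
      rw [← Pi.single_smul, smul_eq_mul, mul_one]
    rw [hc, map_smul, map_smul]
    rcases zmod_two_eq_zero_or_one (φ (Pi.single i 1)) with h | h <;>
      simp [LinearMap.sum_apply, Pi.single_apply, h]

lemma walsh_z2b (S : Finset (Fin n)) (v : Fin n → ZMod 2) :
    walsh S (z2b v) = zmodTwoSign (finsetEquivDual n S v) := by
  have hS : finsetEquivDual n S v = ∑ i ∈ S, v i := by
    simp [finsetEquivDual, LinearMap.sum_apply]
  rw [hS, zmodTwoSign_sum]
  refine prod_congr rfl fun i _ => ?_
  rcases zmod_two_eq_zero_or_one (v i) with h | h <;> simp [z2b, zmodTwoSign, h, ZMod.val_one]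

def walshTransport (L : (Fin n → ZMod 2) ≃ₗ[ZMod 2] (Fin n → ZMod 2)) :
    Finset (Fin n) ≃ Finset (Fin n) :=
  (finsetEquivDual n).trans (L.symm.dualMap.toEquiv.trans (finsetEquivDual n).symm)

lemma walsh_walshTransport (L : (Fin n → ZMod 2) ≃ₗ[ZMod 2] (Fin n → ZMod 2))
    (S : Finset (Fin n)) (x : Fin n → Bool) :
    walsh (walshTransport L S) (z2b (L (b2z x))) = walsh S x := by
  rw [← z2b_b2z x, walsh_z2b, walsh_z2b, b2z_z2b]
  simp [walshTransport]

lemma fourierCf_comp_linearEquiv (f : (Fin n → Bool) → Bool)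
    (L : (Fin n → ZMod 2) ≃ₗ[ZMod 2] (Fin n → ZMod 2)) (S : Finset (Fin n)) :
    fourierCf (fun x => f (z2b (L (b2z x)))) S = fourierCf f (walshTransport L S) := by
  rw [fourierCf_eq_sum_walsh, fourierCf_eq_sum_walsh]
  congr 1
  refine Fintype.sum_equiv ((boolZModEquiv n).trans (L.toEquiv.trans (boolZModEquiv n).symm))
    _ _ fun x => ?_
  simp only [Equiv.trans_apply, boolZModEquiv, Equiv.coe_fn_mk, Equiv.coe_fn_symm_mk,
    LinearEquiv.coe_toEquiv, walsh_walshTransport]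
  rfl

lemma sparsity_comp_linearEquiv (f : (Fin n → Bool) → Bool)
    (L : (Fin n → ZMod 2) ≃ₗ[ZMod 2] (Fin n → ZMod 2)) :
    sparsity (fun x => f (z2b (L (b2z x)))) = sparsity f :=
  card_equiv (walshTransport L) fun S => by simp [fourierCf_comp_linearEquiv]

end Walsh

section LinearSubstitution

variable {n : ℕ}

/-- `L = id + N` with `N x = ∑ᵢ x_{a i} • (v i - e_{a i})`: `N` only reads the coordinates `a i`
and its values vanish there, so `N ∘ N = 0` and, in characteristic 2, `L` is an involution. -/
lemma exists_linearEquiv_apply_single {ι : Type*} [Fintype ι] (a : ι ↪ Fin n)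
    (v : ι → Fin n → ZMod 2) (hv : ∀ i j, v i (a j) = if j = i then 1 else 0) :
    ∃ L : (Fin n → ZMod 2) ≃ₗ[ZMod 2] (Fin n → ZMod 2), ∀ i, L (Pi.single (a i) 1) = v i := by
  obtain ⟨N, hN⟩ : ∃ N : (Fin n → ZMod 2) →ₗ[ZMod 2] (Fin n → ZMod 2),
      ∀ x, N x = ∑ i, x (a i) • (v i - Pi.single (a i) 1) :=
    ⟨∑ i, (LinearMap.proj (a i)).smulRight (v i - Pi.single (a i) 1), fun x => by
      simp [LinearMap.sum_apply]⟩
  have hN_coord : ∀ x j, N x (a j) = 0 := fun x j => by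
    simp [hN, Finset.sum_apply, hv, Pi.single_apply, a.injective.eq_iff]
  have hN_single : ∀ j, N (Pi.single (a j) 1) = v j - Pi.single (a j) 1 := fun j => by
    simp [hN, Pi.single_apply, a.injective.eq_iff]
  have hNN : ∀ x, N (N x) = 0 := fun x => by
    simp [hN (N x), hN_coord]
  have hinv : Involutive (LinearMap.id + N : (Fin n → ZMod 2) →ₗ[ZMod 2] _) := fun x => by
    have h2 : N x + N x = 0 := funext fun i => CharTwo.add_self_eq_zero (N x i)
    rw [LinearMap.add_apply, LinearMap.add_apply, LinearMap.id_apply, LinearMap.id_apply,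
      map_add, hNN, add_zero, add_assoc, h2, add_zero]
  refine ⟨LinearEquiv.ofInvolutive _ hinv, fun i => ?_⟩
  change Pi.single (a i) 1 + N (Pi.single (a i) 1) = v i
  rw [hN_single, add_sub_cancel]

lemma exists_linearEquiv_card_le_sens {ι : Type*} [Fintype ι] (f : (Fin n → Bool) → Bool)
    (hf : f (fun _ => false) = false) (a : ι ↪ Fin n) (p : ι → Fin n → Bool)
    (hp : ∀ i j, p i (a j) = decide (j = i)) (hpf : ∀ i, f (p i) = true) :
    ∃ L : (Fin n → ZMod 2) ≃ₗ[ZMod 2] (Fin n → ZMod 2),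
      Fintype.card ι ≤ sens (fun x => f (z2b (L (b2z x)))) := by
  obtain ⟨L, hL⟩ := exists_linearEquiv_apply_single a (fun i => b2z (p i)) fun i j => by
    by_cases h : j = i <;> simp [b2z, hp, h]
  refine ⟨L, ?_⟩
  calc Fintype.card ι = (univ.map a).card := by simp
    _ ≤ _ := card_le_sens (a := fun _ => false) fun k hk => ?_
  obtain ⟨i, -, rfl⟩ := mem_map.1 hk
  have hflip : bxor (fun _ => false) (eI (a i)) = eI (a i) := by
    funext j
    simp [bxor]
  simp [hflip, b2z_eI, hL, z2b_b2z, hpf, b2z_false, z2b_zero, hf]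

end LinearSubstitution

section TreeLayout

lemma two_pow_succ_sub_one_add (k : ℕ) :
    2 ^ (k + 1) - 1 + (2 ^ (k + 1) - 1) + 1 = 2 ^ (k + 2) - 1 := by
  have : 0 < 2 ^ k := by positivity
  rw [pow_succ, pow_succ]
  omega

/-- The input layout of `fTree (k + 2)`: root bit, then left subtree, then right subtree. -/
def treeIdx (k : ℕ) : Fin (2 ^ (k + 1) - 1 + (2 ^ (k + 1) - 1) + 1) ≃ Fin (2 ^ (k + 2) - 1) :=
  finCongr (two_pow_succ_sub_one_add k)

def rootIdx (k : ℕ) : Fin (2 ^ (k + 2) - 1) := treeIdx k 0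

def leftIdx (k : ℕ) (j : Fin (2 ^ (k + 1) - 1)) : Fin (2 ^ (k + 2) - 1) :=
  treeIdx k (Fin.castAdd _ j).succ

def rightIdx (k : ℕ) (j : Fin (2 ^ (k + 1) - 1)) : Fin (2 ^ (k + 2) - 1) :=
  treeIdx k (Fin.natAdd _ j).succ

variable {k : ℕ}

lemma leftIdx_val (j : Fin (2 ^ (k + 1) - 1)) : (leftIdx k j).val = j + 1 := rfl

lemma rightIdx_val (j : Fin (2 ^ (k + 1) - 1)) : (rightIdx k j).val = j + 2 ^ (k + 1) := by
  have : 0 < 2 ^ (k + 1) := by positivity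
  simp only [rightIdx, treeIdx, finCongr_apply, Fin.val_cast, Fin.val_succ, Fin.val_natAdd]
  omega

lemma fTree_succ_succ (x : Fin (2 ^ (k + 2) - 1) → Bool) :
    fTree (k + 2) x =
      if x (rootIdx k) then fTree (k + 1) (x ∘ rightIdx k) else fTree (k + 1) (x ∘ leftIdx k) := by
  rw [fTree]
  congr 3
  funext j
  exact congrArg x (Fin.ext (rightIdx_val j).symm)

lemma leftIdx_injective : Injective (leftIdx k) :=
  (treeIdx k).injective.comp ((Fin.succ_injective _).comp (Fin.castAdd_injective _ _))

lemma rightIdx_injective : Injective (rightIdx k) :=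
  (treeIdx k).injective.comp ((Fin.succ_injective _).comp (Fin.natAdd_injective _ _))

lemma leftIdx_ne_rightIdx (i j : Fin (2 ^ (k + 1) - 1)) : leftIdx k i ≠ rightIdx k j := fun h => by
  have := congrArg Fin.val h
  rw [leftIdx_val, rightIdx_val] at this
  have := i.isLt
  omega

lemma eq_rootIdx_or_leftIdx_or_rightIdx (i : Fin (2 ^ (k + 2) - 1)) :
    i = rootIdx k ∨ (∃ j, i = leftIdx k j) ∨ ∃ j, i = rightIdx k j := by
  obtain ⟨t, rfl⟩ := (treeIdx k).surjective i
  refine Fin.cases (Or.inl rfl) (fun u => ?_) t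
  exact Fin.addCases (fun j => Or.inr (Or.inl ⟨j, rfl⟩)) (fun j => Or.inr (Or.inr ⟨j, rfl⟩)) u

lemma prod_univ_eq_rootIdx_mul_leftIdx_mul_rightIdx {M : Type*} [CommMonoid M]
    (g : Fin (2 ^ (k + 2) - 1) → M) :
    ∏ i, g i = g (rootIdx k) * ((∏ j, g (leftIdx k j)) * ∏ j, g (rightIdx k j)) := by
  rw [← (treeIdx k).prod_comp, Fin.prod_univ_succ, Fin.prod_univ_add]
  rfl

def nodeEquiv (k : ℕ) (α : Type*) :
    α × (Fin (2 ^ (k + 1) - 1) → α) × (Fin (2 ^ (k + 1) - 1) → α) ≃ (Fin (2 ^ (k + 2) - 1) → α) :=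
  ((Equiv.refl α).prodCongr (Fin.appendEquiv _ _)).trans
    ((Fin.consEquiv fun _ => α).trans ((treeIdx k).arrowCongr (Equiv.refl α)))

variable {α : Type*} (b : α) (z z' : Fin (2 ^ (k + 1) - 1) → α)

@[simp]
lemma nodeEquiv_apply_rootIdx : nodeEquiv k α (b, z, z') (rootIdx k) = b := by
  simp [nodeEquiv, rootIdx]

@[simp]
lemma nodeEquiv_apply_leftIdx (j : Fin (2 ^ (k + 1) - 1)) :
    nodeEquiv k α (b, z, z') (leftIdx k j) = z j := by
  simp [nodeEquiv, leftIdx]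

@[simp]
lemma nodeEquiv_apply_rightIdx (j : Fin (2 ^ (k + 1) - 1)) :
    nodeEquiv k α (b, z, z') (rightIdx k j) = z' j := by
  simp [nodeEquiv, rightIdx, -Fin.natAdd_eq_addNat]

lemma fTree_nodeEquiv (b : Bool) (z z' : Fin (2 ^ (k + 1) - 1) → Bool) :
    fTree (k + 2) (nodeEquiv k Bool (b, z, z')) = if b then fTree (k + 1) z' else fTree (k + 1) z := by
  rw [fTree_succ_succ]
  simp [comp_def]

end TreeLayout

/-- `a i` is the `i`-th leaf and `p i` the input that walks down to it and reads `1` there. -/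
lemma exists_fTree_leaf_inputs : ∀ k : ℕ, ∃ (ι : Type) (_ : Fintype ι)
    (a : ι ↪ Fin (2 ^ (k + 1) - 1)) (p : ι → Fin (2 ^ (k + 1) - 1) → Bool),
    Fintype.card ι = 2 ^ k ∧ (∀ i j, p i (a j) = decide (j = i)) ∧ ∀ i, fTree (k + 1) (p i) = true
  | 0 => ⟨Unit, inferInstance, ⟨fun _ => ⟨0, by norm_num⟩, fun _ _ _ => rfl⟩, fun _ _ => true,
      rfl, fun _ _ => by simp, fun _ => rfl⟩
  | k + 1 => by
    obtain ⟨ι, _, a, p, hcard, hp, hpf⟩ := exists_fTree_leaf_inputs k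
    let a' : ι ⊕ ι ↪ Fin (2 ^ (k + 2) - 1) :=
      ⟨Sum.elim (leftIdx k ∘ a) (rightIdx k ∘ a),
        (leftIdx_injective.comp a.injective).sumElim (rightIdx_injective.comp a.injective)
          fun _ _ => leftIdx_ne_rightIdx _ _⟩
    refine ⟨ι ⊕ ι, inferInstance, a',
      Sum.elim (fun i => nodeEquiv k Bool (false, p i, fun _ => false))
        (fun i => nodeEquiv k Bool (true, fun _ => false, p i)), ?_, ?_, ?_⟩
    · rw [Fintype.card_sum, hcard, pow_succ, mul_two]
    · rintro (i | i) (j | j) <;> simp [a', hp]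
    · rintro (i | i) <;> simp [fTree_nodeEquiv, hpf]

lemma fTree_false : ∀ k : ℕ, fTree k (fun _ => false) = false
  | 0 | 1 => rfl
  | k + 2 => by
    rw [fTree_succ_succ, if_neg Bool.false_ne_true]
    exact fTree_false (k + 1)

section TreeFourier

variable {k : ℕ}

def leftPart (k : ℕ) (S : Finset (Fin (2 ^ (k + 2) - 1))) : Finset (Fin (2 ^ (k + 1) - 1)) :=
  univ.filter fun j => leftIdx k j ∈ S

def rightPart (k : ℕ) (S : Finset (Fin (2 ^ (k + 2) - 1))) : Finset (Fin (2 ^ (k + 1) - 1)) :=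
  univ.filter fun j => rightIdx k j ∈ S

lemma walsh_nodeEquiv (S : Finset (Fin (2 ^ (k + 2) - 1))) (b : Bool)
    (z z' : Fin (2 ^ (k + 1) - 1) → Bool) :
    walsh S (nodeEquiv k Bool (b, z, z')) =
      (if rootIdx k ∈ S ∧ b then -1 else 1) * (walsh (leftPart k S) z * walsh (rightPart k S) z') := by
  rw [walsh, ← Fintype.prod_ite_mem, prod_univ_eq_rootIdx_mul_leftIdx_mul_rightIdx]
  simp only [nodeEquiv_apply_rootIdx, nodeEquiv_apply_leftIdx, nodeEquiv_apply_rightIdx, walsh,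
    leftPart, rightPart, prod_filter]
  by_cases h : rootIdx k ∈ S <;> simp [h]

lemma toPM_fTree_nodeEquiv (b : Bool) (z z' : Fin (2 ^ (k + 1) - 1) → Bool) :
    toPM (fTree (k + 2)) (nodeEquiv k Bool (b, z, z')) =
      if b then toPM (fTree (k + 1)) z' else toPM (fTree (k + 1)) z := by
  rw [toPM, fTree_nodeEquiv]
  cases b <;> rfl

lemma fourierCf_fTree_succ_succ (S : Finset (Fin (2 ^ (k + 2) - 1))) :
    fourierCf (fTree (k + 2)) S =
      ((if rightPart k S = ∅ then fourierCf (fTree (k + 1)) (leftPart k S) else 0) +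
        (if rootIdx k ∈ S then -1 else 1) *
          (if leftPart k S = ∅ then fourierCf (fTree (k + 1)) (rightPart k S) else 0)) / 2 := by
  have hfalse : ∑ p : (Fin (2 ^ (k + 1) - 1) → Bool) × (Fin (2 ^ (k + 1) - 1) → Bool),
      toPM (fTree (k + 2)) (nodeEquiv k Bool (false, p)) * walsh S (nodeEquiv k Bool (false, p)) =
        (∑ z, toPM (fTree (k + 1)) z * walsh (leftPart k S) z) * ∑ z', walsh (rightPart k S) z' := by
    rw [sum_mul_sum, Fintype.sum_prod_type]
    refine sum_congr rfl fun z _ => sum_congr rfl fun z' _ => ?_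
    simp only [toPM_fTree_nodeEquiv, walsh_nodeEquiv, Bool.false_eq_true, and_false, if_false]
    ring
  have htrue : ∑ p : (Fin (2 ^ (k + 1) - 1) → Bool) × (Fin (2 ^ (k + 1) - 1) → Bool),
      toPM (fTree (k + 2)) (nodeEquiv k Bool (true, p)) * walsh S (nodeEquiv k Bool (true, p)) =
        (if rootIdx k ∈ S then -1 else 1) * ((∑ z, walsh (leftPart k S) z) *
          ∑ z', toPM (fTree (k + 1)) z' * walsh (rightPart k S) z') := by
    rw [sum_mul_sum, mul_sum, Fintype.sum_prod_type]
    refine sum_congr rfl fun z _ => ?_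
    rw [mul_sum]
    refine sum_congr rfl fun z' _ => ?_
    simp only [toPM_fTree_nodeEquiv, walsh_nodeEquiv, and_true, if_true]
    ring
  have hcard : (2 : ℝ) ^ (2 ^ (k + 2) - 1) = 2 ^ (2 ^ (k + 1) - 1) * 2 ^ (2 ^ (k + 1) - 1) * 2 := by
    rw [← two_pow_succ_sub_one_add k, pow_succ, pow_add]
  rw [fourierCf_eq_sum_walsh, ← (nodeEquiv k Bool).sum_comp, Fintype.sum_prod_type,
    Fintype.sum_bool, htrue, hfalse, sum_walsh, sum_walsh, sum_toPM_mul_walsh,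
    sum_toPM_mul_walsh, hcard]
  split_ifs <;> field_simp <;> ring

end TreeFourier

section TreeSparsity

lemma fourierCf_fTree_empty : ∀ k : ℕ, fourierCf (fTree (k + 1)) ∅ = 0
  | 0 => by
    have hleaf : ∀ x, toPM (fTree 1) x * walsh ∅ x = walsh {⟨0, by norm_num⟩} x := fun x => by
      simp only [toPM, walsh, prod_empty, mul_one, prod_singleton]
      rfl
    rw [fourierCf_eq_sum_walsh, Fintype.sum_congr _ _ hleaf, sum_walsh,
      if_neg (singleton_ne_empty _), mul_zero]
  | k + 1 => by
    rw [fourierCf_fTree_succ_succ]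
    simp [leftPart, rightPart, fourierCf_fTree_empty k]

variable {k : ℕ}

lemma injective_rootIdx_mem_leftPart_rightPart :
    Injective fun S : Finset (Fin (2 ^ (k + 2) - 1)) =>
      (decide (rootIdx k ∈ S), leftPart k S, rightPart k S) := by
  intro S T h
  simp only [Prod.mk.injEq, decide_eq_decide] at h
  obtain ⟨h0, h1, h2⟩ := h
  ext i
  rcases eq_rootIdx_or_leftIdx_or_rightIdx i with rfl | ⟨j, rfl⟩ | ⟨j, rfl⟩
  · exact h0
  · simpa [leftPart] using congrArg (j ∈ ·) h1
  · simpa [rightPart] using congrArg (j ∈ ·) h2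

lemma fourierCf_fTree_succ_succ_ne_zero {S : Finset (Fin (2 ^ (k + 2) - 1))}
    (h : fourierCf (fTree (k + 2)) S ≠ 0) :
    (fourierCf (fTree (k + 1)) (leftPart k S) ≠ 0 ∧ rightPart k S = ∅) ∨
      (leftPart k S = ∅ ∧ fourierCf (fTree (k + 1)) (rightPart k S) ≠ 0) := by
  rw [fourierCf_fTree_succ_succ] at h
  by_cases hl : leftPart k S = ∅ <;> by_cases hr : rightPart k S = ∅ <;>
    split_ifs at h <;> simp_all [fourierCf_fTree_empty]

lemma sparsity_fTree_le : ∀ k : ℕ, sparsity (fTree (k + 1)) ≤ 4 ^ k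
  | 0 => by
    calc sparsity (fTree 1) ≤ (univ.erase ∅).card := card_le_card fun S hS =>
          mem_erase.2 ⟨fun h => (mem_filter.1 hS).2 (h ▸ fourierCf_fTree_empty 0), mem_univ S⟩
      _ = 4 ^ 0 := by simp
  | k + 1 => by
    set supp := univ.filter fun T => fourierCf (fTree (k + 1)) T ≠ 0
    calc sparsity (fTree (k + 2))
        ≤ (univ ×ˢ (supp ×ˢ {∅} ∪ {∅} ×ˢ supp)).card := by
          refine card_le_card_of_injOn _ (fun S hS => ?_)
            injective_rootIdx_mem_leftPart_rightPart.injOn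
          rcases fourierCf_fTree_succ_succ_ne_zero (mem_filter.1 hS).2 with h | h <;>
            simp [supp, h, em]
      _ ≤ 2 * (supp.card + supp.card) := by
          rw [card_product, card_univ, Fintype.card_bool]
          grw [card_union_le, card_product, card_product, card_singleton, mul_one, one_mul]
      _ ≤ 4 ^ (k + 1) := by
          have : supp.card ≤ 4 ^ k := sparsity_fTree_le k
          have : 4 ^ (k + 1) = 4 ^ k * 4 := pow_succ 4 k
          omega

end TreeSparsity

/-- for every `k ≥ 2` there is an invertible `F_2`-linear map `L` on
`F_2^{2^k - 1}` such that `g = f_k ∘ L` satisfies `s(g) ≥ √(sparsity(g))/2 - 1`, i.e.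
`2·(s(g) + 1) ≥ √(sparsity(g))`. -/
theorem stmt12 (k : ℕ) (hk : 2 ≤ k) :
    ∃ L : (Fin (2 ^ k - 1) → ZMod 2) ≃ₗ[ZMod 2] (Fin (2 ^ k - 1) → ZMod 2),
      Real.sqrt (sparsity (fun x => fTree k (z2b (L (b2z x)))))
        ≤ 2 * ((sens (fun x => fTree k (z2b (L (b2z x)))) : ℝ) + 1) := by
  obtain ⟨j, rfl⟩ : ∃ j, k = j + 1 := ⟨k - 1, by omega⟩
  obtain ⟨ι, _, a, p, hcard, hp, hpf⟩ := exists_fTree_leaf_inputs j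
  obtain ⟨L, hsens⟩ := exists_linearEquiv_card_le_sens _ (fTree_false _) a p hp hpf
  refine ⟨L, ?_⟩
  have hsp : (sparsity fun x => fTree (j + 1) (z2b (L (b2z x))) : ℝ) ≤ (2 ^ j) ^ 2 := by
    rw [sparsity_comp_linearEquiv, ← pow_mul, mul_comm, pow_mul]
    exact_mod_cast (sparsity_fTree_le j).trans (by norm_num)
  have hs : (2 : ℝ) ^ j ≤ sens fun x => fTree (j + 1) (z2b (L (b2z x))) := by
    exact_mod_cast hcard ▸ hsens
  calc Real.sqrt _ ≤ 2 ^ j := Real.sqrt_le_iff.2 ⟨by positivity, hsp⟩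
    _ ≤ 2 * ((sens fun x => fTree (j + 1) (z2b (L (b2z x))) : ℝ) + 1) := by linarith
end
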